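/- arXiv:1809.10195 — 2 statements merged into one kernel-verified Lean document; each statement's English description precedes it below -/
import Mathlib

section
/- Let p be an odd prime and G a finite group of order n = u_p·p^r with p ∤ u_p. Let h be an integer with h^{p−1} ≡ 1 (mod p^r) and h ≢ 1 (mod p), and let a be an integer with a ≡ 0 (mod u_p) and (p−1)a ≡ 1 (mod p^r). If x ∈ G has p-power order, τ ∈ G has order coprime to p, and τ commutes with x, then ⟨x,τ⟩ = (x^{h^{p−1}} τ · x^{h^{p−2}} τ ⋯ x^{h} τ)^{a} = 1. -/
/-!
Because `x` and `τ` commute, the product collapses to `x ^ S * τ ^ (p - 1)` with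
`S = h + h² + ⋯ + h^{p-1}`. Since `(h - 1) * S = h * (h^{p-1} - 1)` is divisible by `p^r` and
`h - 1` is prime to `p`, `p^r ∣ S`, which kills the `p`-element `x`; and `u ∣ a` kills `τ`.
-/

/-- `⟨x, y⟩ = (x^{h^{p-1}} y ⋅ x^{h^{p-2}} y ⋯ x^{h} y)^{a}`. -/
def tameBracket (p : ℕ) (h a : ℤ) {G : Type*} [Group G] (x y : G) : G :=
  (((List.range (p - 1)).map fun i => x ^ (h ^ (p - 1 - i)) * y).prod) ^ a

open Finset

theorem Commute.list_prod_map_zpow_mul {G ι : Type*} [Group G] {x y : G} (hxy : Commute x y)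
    (e : ι → ℤ) (l : List ι) :
    (l.map fun i => x ^ e i * y).prod = x ^ (l.map e).sum * y ^ l.length := by
  induction l with
  | nil => simp
  | cons i l ih =>
    simp only [List.map_cons, List.prod_cons, List.sum_cons, List.length_cons, ih, zpow_add,
      pow_succ']
    rw [mul_assoc, ← mul_assoc y, (hxy.symm.zpow_right _).eq]
    simp only [mul_assoc]

theorem sum_range_pow_sub_eq_mul_geom_sum {R : Type*} [CommSemiring R] (h : R) (m : ℕ) :
    ∑ i ∈ range m, h ^ (m - i) = h * ∑ i ∈ range m, h ^ i := by
  rw [mul_sum, ← sum_range_reflect]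
  refine sum_congr rfl fun i hi => ?_
  rw [← pow_succ']
  congr 1
  have := mem_range.mp hi
  omega

theorem dvd_sum_range_pow_sub_of_isCoprime {R : Type*} [CommRing R] {q h : R} {m : ℕ}
    (hq : IsCoprime q (h - 1)) (hm : q ∣ h ^ m - 1) : q ∣ ∑ i ∈ range m, h ^ (m - i) := by
  rw [sum_range_pow_sub_eq_mul_geom_sum]
  exact dvd_mul_of_dvd_right (hq.dvd_of_dvd_mul_right (geom_sum_mul h m ▸ hm)) h

theorem orderOf_dvd_of_natCard_eq_mul_of_coprime {G : Type*} [Group G] {g : G} {m n : ℕ}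
    (hcard : Nat.card G = m * n) (hg : (orderOf g).Coprime m) : orderOf g ∣ n :=
  hg.dvd_of_dvd_mul_left (hcard ▸ orderOf_dvd_natCard g)

theorem tameBracket_eq_one_general (p : ℕ) [Fact p.Prime]
    (G : Type*) [Group G] (u r : ℕ)
    (hcard : Nat.card G = u * p ^ r) (hu : ¬ p ∣ u)
    (h a : ℤ)
    (hh1 : h ^ (p - 1) ≡ 1 [ZMOD ((p : ℤ) ^ r)])
    (hh2 : ¬ h ≡ 1 [ZMOD (p : ℤ)])
    (ha0 : a ≡ 0 [ZMOD (u : ℤ)])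
    (x τ : G) (hx : ∃ k : ℕ, orderOf x = p ^ k)
    (hτ : Nat.Coprime (orderOf τ) p) (hcomm : Commute x τ) :
    tameBracket p h a x τ = 1 := by
  obtain ⟨k, hk⟩ := hx
  have hp : p.Prime := Fact.out
  have hx_ord : orderOf x ∣ p ^ r := orderOf_dvd_of_natCard_eq_mul_of_coprime hcard
    (hk ▸ ((Nat.Prime.coprime_iff_not_dvd hp).mpr hu).pow_left k)
  have hτ_ord : orderOf τ ∣ u :=
    orderOf_dvd_of_natCard_eq_mul_of_coprime (hcard.trans (mul_comm _ _)) (hτ.pow_right r)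
  have hcop : IsCoprime ((p : ℤ) ^ r) (h - 1) :=
    ((Nat.prime_iff_prime_int.mp hp).coprime_iff_not_dvd.mpr
      fun hdvd => hh2 (Int.modEq_iff_dvd.mpr hdvd).symm).pow_left
  have hS := dvd_sum_range_pow_sub_of_isCoprime hcop hh1.symm.dvd
  -- the list sum below is definitionally the `Finset` sum in `hS`
  have hxS : x ^ ((List.range (p - 1)).map fun i => h ^ (p - 1 - i)).sum = 1 :=
    orderOf_dvd_iff_zpow_eq_one.mp
      ((Int.natCast_dvd_natCast.mpr hx_ord).trans (by exact_mod_cast hS))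
  have hτa : τ ^ a = 1 :=
    orderOf_dvd_iff_zpow_eq_one.mp
      ((Int.natCast_dvd_natCast.mpr hτ_ord).trans (Int.modEq_zero_iff_dvd.mp ha0))
  rw [tameBracket, hcomm.list_prod_map_zpow_mul, hxS, one_mul,
    List.length_range, ← zpow_natCast, ← zpow_mul, mul_comm, zpow_mul, hτa, one_zpow]

/-- If `x` has `p`-power order, `τ` has order coprime to `p`, and `x` and `τ` commute,
then `⟨x, τ⟩ = 1`. -/
theorem tameBracket_eq_one (p : ℕ) [Fact p.Prime] (hodd : Odd p)
    (G : Type*) [Group G] [Finite G] (u r : ℕ)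
    (hcard : Nat.card G = u * p ^ r) (hu : ¬ p ∣ u)
    (h a : ℤ)
    (hh1 : h ^ (p - 1) ≡ 1 [ZMOD ((p : ℤ) ^ r)])
    (hh2 : ¬ h ≡ 1 [ZMOD (p : ℤ)])
    (ha0 : a ≡ 0 [ZMOD (u : ℤ)])
    (ha1 : ((p : ℤ) - 1) * a ≡ 1 [ZMOD ((p : ℤ) ^ r)])
    (x τ : G) (hx : ∃ k : ℕ, orderOf x = p ^ k)
    (hτ : Nat.Coprime (orderOf τ) p) (hcomm : Commute x τ) :
    tameBracket p h a x τ = 1 :=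
  tameBracket_eq_one_general p G u r hcard hu h a hh1 hh2 ha0 x τ hx hτ hcomm
end

section
/- Let p be an odd prime and G a finite group with p-core V and W = V^p·[V,V]. Then G is tame-decoupled if and only if the quotient group G/W is tame-decoupled. -/
open scoped Pointwise

/-- The `p`-core of `G`: the intersection of all Sylow `p`-subgroups. -/
def pCore (p : ℕ) (G : Type*) [Group G] : Subgroup G :=
  ⨅ P : Sylow p G, (P : Subgroup G)

instance pCore_normal (p : ℕ) (G : Type*) [Group G] : (pCore p G).Normal := by
  constructor
  intro x hx g
  rw [pCore, Subgroup.mem_iInf] at hx ⊢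
  intro P
  have h := hx (g⁻¹ • P)
  rw [Sylow.coe_subgroup_smul, Subgroup.mem_pointwise_smul_iff_inv_smul_mem] at h
  simpa [MulAut.conj] using h

/-- `W = V^p⋅[V,V]`, the Frattini subgroup of the `p`-core `V`, as a subgroup of `G`. -/
def pFrattini (p : ℕ) (G : Type*) [Group G] : Subgroup G :=
  Subgroup.closure ((fun v => v ^ p) '' (pCore p G : Set G)) ⊔ ⁅pCore p G, pCore p G⁆

instance pFrattini_normal (p : ℕ) (G : Type*) [Group G] : (pFrattini p G).Normal := by
  have h1 : (Subgroup.closure ((fun v => v ^ p) '' (pCore p G : Set G))).Normal := by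
    constructor
    intro x hx g
    induction hx using Subgroup.closure_induction'' with
    | one => simpa using Subgroup.one_mem _
    | mem y hy =>
        obtain ⟨v, hv, rfl⟩ := hy
        refine Subgroup.subset_closure ⟨g * v * g⁻¹, (pCore_normal p G).conj_mem v hv g, ?_⟩
        simp [conj_pow]
    | inv_mem y hy =>
        obtain ⟨v, hv, rfl⟩ := hy
        have : g * (v ^ p)⁻¹ * g⁻¹ = ((g * v * g⁻¹) ^ p)⁻¹ := by
          rw [conj_pow]; group
        rw [this]
        exact Subgroup.inv_mem _ (Subgroup.subset_closure
          ⟨g * v * g⁻¹, (pCore_normal p G).conj_mem v hv g, by simp [conj_pow]⟩)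
    | mul y z _ _ hy hz =>
        have : g * (y * z) * g⁻¹ = (g * y * g⁻¹) * (g * z * g⁻¹) := by group
        rw [this]
        exact Subgroup.mul_mem _ hy hz
  have h2 : (⁅pCore p G, pCore p G⁆ : Subgroup G).Normal := Subgroup.commutator_normal _ _
  exact Subgroup.sup_normal _ _

/-- Membership in `T_G`: the tame relation holds and the images of `σ, τ` generate `G/V`. -/
def MemTG (p : ℕ) {G : Type*} [Group G] (σ τ : G) : Prop :=
  σ⁻¹ * τ * σ = τ ^ p ∧ Subgroup.closure {σ, τ} ⊔ pCore p G = ⊤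

/-- `G` is tame-decoupled if `τ` acts trivially on `V/W` for every `(σ,τ) ∈ T_G`. -/
def IsTameDecoupled (p : ℕ) (G : Type*) [Group G] : Prop :=
  ∀ σ τ : G, MemTG p σ τ → ∀ v ∈ pCore p G, τ⁻¹ * v * τ * v⁻¹ ∈ pFrattini p G

/-!
The reverse implication is formal: the Frattini subgroup of `V/W` is trivial, and a pair in `T_G`
maps to a pair in `T_{G/W}`. For the forward implication one lifts a pair `(σ', τ') ∈ T_{G/W}` to
a pair `(σ, x) ∈ T_G` with `x` over `τ'`. Take for `x` a lift of `τ'` of order prime to `p`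
(a conjugate of a `p`-power of an arbitrary lift) and any lift `σ₀` of `σ'`. Then
`σ₀ x^p σ₀⁻¹` and `x` have order prime to `p` and lie in the same coset of the `p`-group `W`, so
they are conjugate under `W` (coprime conjugacy: by averaging when `W` is abelian, in general by
induction through a nontrivial abelian normal subgroup of `G` inside `W`). Correcting `σ₀` by the
conjugating element gives the exact relation `σ⁻¹ x σ = x ^ p`; since `W ≤ V`, the pair `(σ, x)`
still generates `G` modulo `V`, and tame-decoupling at `(σ, x)` descends to `(σ', τ')`.
-/

section PCore

variable {p : ℕ} {G : Type*} [Group G]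

theorem isPGroup_pCore : IsPGroup p (pCore p G) :=
  (default : Sylow p G).isPGroup'.to_le (iInf_le _ _)

theorem le_pCore_of_normal {N : Subgroup G} [N.Normal] (hN : IsPGroup p N) : N ≤ pCore p G :=
  le_iInf hN.le_sylow_of_normal

theorem pFrattini_le_pCore : pFrattini p G ≤ pCore p G :=
  sup_le ((Subgroup.closure_le _).2 <| Set.image_subset_iff.2 fun _ hv => pow_mem hv p)
    (Subgroup.commutator_le_left _ _)

theorem isPGroup_pFrattini : IsPGroup p (pFrattini p G) :=
  isPGroup_pCore.to_le pFrattini_le_pCore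

theorem pCore_quotient_pFrattini :
    pCore p (G ⧸ pFrattini p G) = (pCore p G).map (QuotientGroup.mk' (pFrattini p G)) := by
  refine le_antisymm ?_ (le_pCore_of_normal (isPGroup_pCore.map _))
  have hker : IsPGroup p (QuotientGroup.mk' (pFrattini p G)).ker := by
    rw [QuotientGroup.ker_mk']
    exact isPGroup_pFrattini
  rw [← Subgroup.map_comap_eq_self_of_surjective (QuotientGroup.mk'_surjective _) (pCore p _)]
  exact Subgroup.map_mono (le_pCore_of_normal (isPGroup_pCore.comap_of_ker_isPGroup _ hker))

theorem pFrattini_quotient_pFrattini : pFrattini p (G ⧸ pFrattini p G) = ⊥ := by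
  have hmap : pFrattini p (G ⧸ pFrattini p G) = (pFrattini p G).map (QuotientGroup.mk' _) := by
    conv_rhs => arg 2; rw [pFrattini]
    rw [pFrattini.eq_1 p (G ⧸ _), pCore_quotient_pFrattini, Subgroup.map_sup,
      Subgroup.map_commutator, MonoidHom.map_closure, Subgroup.coe_map, Set.image_image,
      Set.image_image]
    simp only [map_pow]
  rw [hmap, QuotientGroup.map_mk'_self]

end PCore

section CoprimeConjugacy

open scoped IsMulCommutative

variable {G : Type*} [Group G]

theorem exists_conj_eq_of_mul_inv_mem_of_isMulCommutative {Z : Subgroup G} [Z.Normal]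
    [IsMulCommutative Z] {n : ℕ} (hn : (Nat.card Z).Coprime n) {x y : G} (hxy : y * x⁻¹ ∈ Z)
    (hx : x ^ n = 1) (hy : y ^ n = 1) : ∃ u ∈ Z, u * x * u⁻¹ = y := by
  have hmem : ∀ k : ℕ, y ^ k * (x ^ k)⁻¹ ∈ Z := by
    intro k
    induction k with
    | zero => simp
    | succ k ih =>
      have h : y ^ (k + 1) * (x ^ (k + 1))⁻¹ = y * (y ^ k * (x ^ k)⁻¹) * y⁻¹ * (y * x⁻¹) := by
        group
      rw [h]
      exact mul_mem ((inferInstance : Z.Normal).conj_mem _ ih y) hxy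
  let c : ℕ → Z := fun k => ⟨y ^ k * (x ^ k)⁻¹, hmem k⟩
  have hc_conj : ∀ k, MulAut.conjNormal y (c k) = c (k + 1) * (c 1)⁻¹ := fun k => by
    ext
    simp only [MulAut.conjNormal_apply, Subgroup.coe_mul, Subgroup.coe_inv, c]
    group
  -- Averaging the cocycle `c` over `k < n` gives an element whose conjugate by `y` differs
  -- from it by `c 1 ^ n`; an `n`-th root of that defect then conjugates `x` to `y`.
  let U : Z := ∏ k ∈ Finset.range n, c k
  have hU : MulAut.conjNormal y U = U * (c 1 ^ n)⁻¹ := by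
    have hshift : ∏ k ∈ Finset.range n, c (k + 1) = U := by
      have hc0 : c 0 = 1 := by ext; simp [c]
      have hcn : c n = 1 := by ext; simp [c, hx, hy]
      have := Finset.prod_range_succ' c n
      rw [Finset.prod_range_succ, hcn, hc0, mul_one, mul_one] at this
      exact this.symm
    simp only [U, map_prod, hc_conj, Finset.prod_mul_distrib, hshift, Finset.prod_const,
      Finset.card_range, inv_pow]
  obtain ⟨m, hm⟩ := exists_pow_eq_self_of_coprime
    (hn.symm.coprime_dvd_right (orderOf_dvd_natCard (c 1)))
  refine ⟨(U ^ m : Z), (U ^ m).2, ?_⟩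
  have hUm : MulAut.conjNormal y (U ^ m) = U ^ m * (c 1)⁻¹ := by
    rw [map_pow, hU, mul_pow, inv_pow, hm]
  have h := congrArg Subtype.val hUm
  simp only [MulAut.conjNormal_apply, Subgroup.coe_mul, Subgroup.coe_inv, c, pow_one] at h
  set u : G := ((U ^ m : Z) : G)
  calc u * x * u⁻¹ = u * (y * x⁻¹)⁻¹ * y * u⁻¹ := by group
    _ = y := by rw [← h]; group

end CoprimeConjugacy

section PGroupConjugacy

variable {p : ℕ} [Fact p.Prime] {G : Type*} [Group G] [Finite G]

theorem IsPGroup.exists_normal_isMulCommutative_le {N : Subgroup G} [N.Normal]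
    (hN : IsPGroup p N) (hN_ne : N ≠ ⊥) :
    ∃ Z ≤ N, Z.Normal ∧ IsMulCommutative Z ∧ Z ≠ ⊥ := by
  have : Nontrivial N := (Subgroup.nontrivial_iff_ne_bot N).2 hN_ne
  have := hN.center_nontrivial
  obtain ⟨z, hz⟩ := exists_ne (1 : Subgroup.center N)
  refine ⟨N ⊓ Subgroup.centralizer N, inf_le_left, inferInstance,
    ⟨⟨fun a b => Subtype.ext (b.2.2 a a.2.1)⟩⟩, fun h => hz ?_⟩
  have hz_mem : ((z : N) : G) ∈ N ⊓ Subgroup.centralizer N := by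
    refine ⟨(z : N).2, Subgroup.mem_centralizer_iff.2 fun g hg => ?_⟩
    exact congrArg Subtype.val (Subgroup.mem_center_iff.1 z.2 ⟨g, hg⟩)
  rw [h, Subgroup.mem_bot] at hz_mem
  exact Subtype.ext (Subtype.ext hz_mem)

theorem IsPGroup.exists_conj_eq_of_mul_inv_mem {N : Subgroup G} [N.Normal]
    (hN : IsPGroup p N) {n : ℕ} (hn : p.Coprime n) {x y : G} (hxy : y * x⁻¹ ∈ N)
    (hx : x ^ n = 1) (hy : y ^ n = 1) : ∃ u ∈ N, u * x * u⁻¹ = y := by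
  induction hcard : Nat.card G using Nat.strong_induction_on generalizing G with
  | _ k ih =>
  by_cases hN_bot : N = ⊥
  · refine ⟨1, one_mem N, ?_⟩
    rw [hN_bot, Subgroup.mem_bot, mul_inv_eq_one] at hxy
    simp [hxy]
  obtain ⟨Z, hZN, hZ_normal, hZ_comm, hZ_ne⟩ := hN.exists_normal_isMulCommutative_le hN_bot
  -- Conjugate `x` to `y` modulo `Z` by induction, then fix the error inside the abelian `Z`.
  have hcard_lt : Nat.card (G ⧸ Z) < k := by
    rw [← hcard, ← Z.card_mul_index, Subgroup.index_eq_card]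
    exact lt_mul_left Nat.card_pos (Z.one_lt_card_iff_ne_bot.2 hZ_ne)
  obtain ⟨u', hu'N, hu'⟩ := ih _ hcard_lt (N := N.map (QuotientGroup.mk' Z)) (hN.map _)
    (x := x) (y := y) (Subgroup.mem_map_of_mem _ hxy)
    (by rw [← QuotientGroup.mk_pow, hx, QuotientGroup.mk_one])
    (by rw [← QuotientGroup.mk_pow, hy, QuotientGroup.mk_one]) rfl
  obtain ⟨u₁, hu₁N, rfl⟩ := Subgroup.mem_map.1 hu'N
  have hZ_coprime : (Nat.card Z).Coprime n := by
    obtain ⟨e, he⟩ := IsPGroup.iff_card.1 (hN.to_le hZN)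
    exact he ▸ hn.pow_left e
  have hxy' : y * (u₁ * x * u₁⁻¹)⁻¹ ∈ Z := by
    rw [← QuotientGroup.eq_one_iff, QuotientGroup.mk_mul, QuotientGroup.mk_inv, ← hu']
    simp
  obtain ⟨u₂, hu₂Z, hu₂⟩ := exists_conj_eq_of_mul_inv_mem_of_isMulCommutative hZ_coprime hxy'
    (by simp [conj_pow, hx]) hy
  exact ⟨u₂ * u₁, mul_mem (hZN hu₂Z) hu₁N, by rw [← hu₂]; group⟩

end PGroupConjugacy

section TameLift

variable {p : ℕ} {G : Type*} [Group G]

theorem pow_inv_mul_mul_pow_eq_pow_pow {σ τ : G} (h : σ⁻¹ * τ * σ = τ ^ p) (k : ℕ) :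
    (σ ^ k)⁻¹ * τ * σ ^ k = τ ^ p ^ k := by
  induction k with
  | zero => simp
  | succ k ih =>
    calc (σ ^ (k + 1))⁻¹ * τ * σ ^ (k + 1) = σ⁻¹ * ((σ ^ k)⁻¹ * τ * σ ^ k) * σ := by group
      _ = (σ⁻¹ * τ * σ) ^ p ^ k := by
          rw [ih]; simpa using (conj_pow (a := σ⁻¹) (b := τ) (i := p ^ k)).symm
      _ = τ ^ p ^ (k + 1) := by rw [h, ← pow_mul, pow_succ']

theorem exists_lift_of_inv_mul_mul_eq_pow [Fact p.Prime] [Finite G] {N : Subgroup G} [N.Normal]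
    (hN : IsPGroup p N) {σ' τ' : G ⧸ N} (h : σ'⁻¹ * τ' * σ' = τ' ^ p) :
    ∃ σ τ : G, (σ : G ⧸ N) = σ' ∧ (τ : G ⧸ N) = τ' ∧ σ⁻¹ * τ * σ = τ ^ p := by
  obtain ⟨σ₀, rfl⟩ := QuotientGroup.mk_surjective σ'
  obtain ⟨τ₀, rfl⟩ := QuotientGroup.mk_surjective τ'
  -- `τ₀ ^ p ^ a` has order prime to `p`, and by the tame relation its conjugate by `σ₀ ^ a`
  -- lies over `τ'` again.
  set a := (orderOf τ₀).factorization p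
  set x := σ₀ ^ a * τ₀ ^ p ^ a * (σ₀ ^ a)⁻¹
  have hx_mk : (x : G ⧸ N) = τ₀ := by
    simp only [x, QuotientGroup.mk_mul, QuotientGroup.mk_pow, QuotientGroup.mk_inv,
      ← pow_inv_mul_mul_pow_eq_pow_pow h a]
    group
  have hx_coprime : p.Coprime (orderOf x) := by
    have hconj : SemiconjBy (σ₀ ^ a) (τ₀ ^ p ^ a) x := by simp only [SemiconjBy, x]; group
    rw [← hconj.orderOf_eq, orderOf_pow_of_dvd (pow_ne_zero _ (Fact.out : p.Prime).ne_zero)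
      (Nat.ordProj_dvd _ _)]
    exact Nat.coprime_ordCompl Fact.out (orderOf_pos τ₀).ne'
  set y := σ₀ * x ^ p * σ₀⁻¹
  have hxy : y * x⁻¹ ∈ N := by
    rw [← QuotientGroup.eq_one_iff]
    simp only [y, QuotientGroup.mk_mul, QuotientGroup.mk_pow, QuotientGroup.mk_inv, hx_mk, ← h]
    group
  have hy : y ^ orderOf x = 1 := by
    rw [conj_pow, ← pow_mul, mul_comm, pow_mul, pow_orderOf_eq_one, one_pow, mul_one,
      mul_inv_cancel]
  obtain ⟨u, huN, hu⟩ := hN.exists_conj_eq_of_mul_inv_mem hx_coprime hxy (pow_orderOf_eq_one x) hy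
  refine ⟨u⁻¹ * σ₀, x, ?_, hx_mk, ?_⟩
  · simp [(QuotientGroup.eq_one_iff u).2 huN]
  · calc (u⁻¹ * σ₀)⁻¹ * x * (u⁻¹ * σ₀) = σ₀⁻¹ * (u * x * u⁻¹) * σ₀ := by group
      _ = x ^ p := by rw [hu]; simp only [y]; group

end TameLift

section QuotientByPFrattini

variable {p : ℕ} {G : Type*} [Group G]

theorem closure_pair_sup_pCore_quotient_eq_top_iff (σ τ : G) :
    Subgroup.closure {(σ : G ⧸ pFrattini p G), (τ : G ⧸ pFrattini p G)} ⊔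
        pCore p (G ⧸ pFrattini p G) = ⊤ ↔
      Subgroup.closure {σ, τ} ⊔ pCore p G = ⊤ := by
  have hmap : Subgroup.closure {(σ : G ⧸ pFrattini p G), (τ : G ⧸ pFrattini p G)} ⊔
      pCore p (G ⧸ pFrattini p G) =
      (Subgroup.closure {σ, τ} ⊔ pCore p G).map (QuotientGroup.mk' _) := by
    rw [Subgroup.map_sup, MonoidHom.map_closure, Set.image_pair, pCore_quotient_pFrattini]
    rfl
  have hker : (QuotientGroup.mk' (pFrattini p G)).ker ≤ Subgroup.closure {σ, τ} ⊔ pCore p G := by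
    rw [QuotientGroup.ker_mk']
    exact pFrattini_le_pCore.trans le_sup_right
  rw [hmap]
  constructor
  · intro htop
    rw [← Subgroup.comap_map_eq_self hker, htop, Subgroup.comap_top]
  · intro htop
    rw [htop, Subgroup.map_top_of_surjective _ (QuotientGroup.mk'_surjective _)]

theorem memTG_quotient_pFrattini {σ τ : G} (hστ : MemTG p σ τ) :
    MemTG p (σ : G ⧸ pFrattini p G) τ :=
  ⟨by rw [← QuotientGroup.mk_inv, ← QuotientGroup.mk_mul, ← QuotientGroup.mk_mul, hστ.1,
      QuotientGroup.mk_pow],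
    (closure_pair_sup_pCore_quotient_eq_top_iff σ τ).2 hστ.2⟩

theorem forall_conj_mul_inv_mem_pFrattini_quotient_iff (τ : G) :
    (∀ v ∈ pCore p (G ⧸ pFrattini p G),
        (τ : G ⧸ pFrattini p G)⁻¹ * v * τ * v⁻¹ ∈ pFrattini p (G ⧸ pFrattini p G)) ↔
      ∀ v ∈ pCore p G, τ⁻¹ * v * τ * v⁻¹ ∈ pFrattini p G := by
  simp only [pCore_quotient_pFrattini, pFrattini_quotient_pFrattini, Subgroup.mem_map,
    Subgroup.mem_bot, forall_exists_index, and_imp, forall_apply_eq_imp_iff₂,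
    QuotientGroup.mk'_apply, ← QuotientGroup.mk_inv, ← QuotientGroup.mk_mul,
    QuotientGroup.eq_one_iff]

end QuotientByPFrattini

theorem tameDecoupled_iff_quotient_general (p : ℕ) [Fact p.Prime]
    (G : Type*) [Group G] [Finite G] :
    IsTameDecoupled p G ↔ IsTameDecoupled p (G ⧸ pFrattini p G) := by
  refine ⟨fun hG σ' τ' hστ' => ?_, fun hQ σ τ hστ =>
    (forall_conj_mul_inv_mem_pFrattini_quotient_iff τ).1 (hQ σ τ (memTG_quotient_pFrattini hστ))⟩
  obtain ⟨σ, τ, rfl, rfl, hrel⟩ := exists_lift_of_inv_mul_mul_eq_pow isPGroup_pFrattini hστ'.1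
  exact (forall_conj_mul_inv_mem_pFrattini_quotient_iff τ).2
    (hG σ τ ⟨hrel, (closure_pair_sup_pCore_quotient_eq_top_iff σ τ).1 hστ'.2⟩)

/-- `G` is tame-decoupled if and only if `G/W` is tame-decoupled. -/
theorem tameDecoupled_iff_quotient (p : ℕ) [Fact p.Prime] (hodd : Odd p)
    (G : Type*) [Group G] [Finite G] :
    IsTameDecoupled p G ↔ IsTameDecoupled p (G ⧸ pFrattini p G) :=
  tameDecoupled_iff_quotient_general p G
end
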